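/- Let G be a graph and T a stable (independent) set of three vertices in G, with e^1, e^2, e^3 the three possible edges between vertices of T. For S \subseteq \{1,2,3\}, let G_S be the graph on V(G) with edge set E(G) \cup \{e^j : j \in S\}. Then X_{G_{12}} = X_{G_1} + X_{G_{23}} - X_{G_3} and X_{G_{123}} = X_{G_{13}} + X_{G_{23}} - X_{G_3}. -/
import Mathlib

/-- The chromatic symmetric function of a finite simple graph. -/
noncomputable def chromSF {V : Type} [Fintype V] [DecidableEq V] (G : SimpleGraph V) :
    MvPowerSeries ℕ ℚ :=
  fun d => ((({κ : V → ℕ | (∀ u v, G.Adj u v → κ u ≠ κ v) ∧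
      ∀ i, (Finset.univ.filter fun v => κ v = i).card = d i} : Set (V → ℕ)).ncard : ℕ) : ℚ)

private lemma OS.key {α : Type*} {A B C : Set α} (hA : A.Finite) (hC : C.Finite)
    (h : A \ B = C \ B) : (A ∩ B).ncard + C.ncard = A.ncard + (B ∩ C).ncard := by
  have h1 := Set.ncard_inter_add_ncard_diff_eq_ncard A B hA
  have h2 := Set.ncard_inter_add_ncard_diff_eq_ncard C B hC
  rw [h] at h1
  rw [Set.inter_comm B C]
  omega

private lemma OS.proper_sup_iff {V : Type} (G : SimpleGraph V) (s : Set (Sym2 V)) (κ : V → ℕ) :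
    (∀ u v, (G ⊔ SimpleGraph.fromEdgeSet s).Adj u v → κ u ≠ κ v) ↔
    ((∀ u v, G.Adj u v → κ u ≠ κ v) ∧ ∀ u v : V, u ≠ v → s(u,v) ∈ s → κ u ≠ κ v) := by
  constructor
  · intro h
    refine ⟨fun u v huv => h u v (Or.inl huv), fun u v hne hm => h u v (Or.inr ?_)⟩
    rw [SimpleGraph.fromEdgeSet_adj]
    exact ⟨hm, hne⟩
  · rintro ⟨h1, h2⟩ u v (huv | huv)
    · exact h1 u v huv
    · rw [SimpleGraph.fromEdgeSet_adj] at huv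
      exact h2 u v huv.2 huv.1

/-- Orellana–Scott triple deletion: for a stable set `{v₁, v₂, v₃}` of a graph `G`,
with `e¹ = v₁v₂`, `e² = v₁v₃`, `e³ = v₂v₃`, and `G_S` the graph obtained by adding
the edges `{eʲ : j ∈ S}`, we have `X_{G₁₂} = X_{G₁} + X_{G₂₃} - X_{G₃}` and
`X_{G₁₂₃} = X_{G₁₃} + X_{G₂₃} - X_{G₃}`. -/
theorem stmt1 {V : Type} [Fintype V] [DecidableEq V] (G : SimpleGraph V)
    (v1 v2 v3 : V) (h12 : v1 ≠ v2) (h13 : v1 ≠ v3) (h23 : v2 ≠ v3)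
    (ha : ¬ G.Adj v1 v2) (hb : ¬ G.Adj v1 v3) (hc : ¬ G.Adj v2 v3)
    (G1 G3 G12 G13 G23 G123 : SimpleGraph V)
    (hG1 : G1 = G ⊔ SimpleGraph.fromEdgeSet {s(v1, v2)})
    (hG3 : G3 = G ⊔ SimpleGraph.fromEdgeSet {s(v2, v3)})
    (hG12 : G12 = G ⊔ SimpleGraph.fromEdgeSet {s(v1, v2), s(v1, v3)})
    (hG13 : G13 = G ⊔ SimpleGraph.fromEdgeSet {s(v1, v2), s(v2, v3)})
    (hG23 : G23 = G ⊔ SimpleGraph.fromEdgeSet {s(v1, v3), s(v2, v3)})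
    (hG123 : G123 = G ⊔ SimpleGraph.fromEdgeSet {s(v1, v2), s(v1, v3), s(v2, v3)}) :
    chromSF G12 = chromSF G1 + chromSF G23 - chromSF G3 ∧
    chromSF G123 = chromSF G13 + chromSF G23 - chromSF G3 := by
  classical
  -- the set of proper colorings with content `d`
  set S : SimpleGraph V → (ℕ →₀ ℕ) → Set (V → ℕ) := fun H d =>
    {κ : V → ℕ | (∀ u v, H.Adj u v → κ u ≠ κ v) ∧
      ∀ i, (Finset.univ.filter fun v => κ v = i).card = d i} with hS
  have hfin : ∀ (H : SimpleGraph V) (d : ℕ →₀ ℕ), (S H d).Finite := by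
    intro H d
    apply Set.Finite.subset (Set.Finite.pi (fun _ : V => (d.support : Set ℕ).toFinite))
    rintro κ ⟨-, hcont⟩
    intro v _
    simp only [Finset.mem_coe, Finsupp.mem_support_iff]
    intro h0
    have hcv := hcont (κ v)
    rw [h0, Finset.card_eq_zero] at hcv
    have : v ∈ (Finset.univ.filter fun w => κ w = κ v) := by simp
    rw [hcv] at this
    exact absurd this (Finset.notMem_empty v)
  -- proper colorings characterizations
  have prop1 : ∀ κ : V → ℕ, (∀ u v, G1.Adj u v → κ u ≠ κ v) ↔
      ((∀ u v, G.Adj u v → κ u ≠ κ v) ∧ κ v1 ≠ κ v2) := by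
    intro κ
    rw [hG1, OS.proper_sup_iff]
    refine and_congr_right fun _ => ⟨fun h => h v1 v2 h12 rfl, ?_⟩
    rintro h u v hne hm
    simp only [Set.mem_singleton_iff, Sym2.eq_iff] at hm
    rcases hm with ⟨rfl, rfl⟩ | ⟨rfl, rfl⟩
    · exact h
    · exact h.symm
  have prop3 : ∀ κ : V → ℕ, (∀ u v, G3.Adj u v → κ u ≠ κ v) ↔
      ((∀ u v, G.Adj u v → κ u ≠ κ v) ∧ κ v2 ≠ κ v3) := by
    intro κ
    rw [hG3, OS.proper_sup_iff]
    refine and_congr_right fun _ => ⟨fun h => h v2 v3 h23 rfl, ?_⟩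
    rintro h u v hne hm
    simp only [Set.mem_singleton_iff, Sym2.eq_iff] at hm
    rcases hm with ⟨rfl, rfl⟩ | ⟨rfl, rfl⟩
    · exact h
    · exact h.symm
  have prop12 : ∀ κ : V → ℕ, (∀ u v, G12.Adj u v → κ u ≠ κ v) ↔
      ((∀ u v, G.Adj u v → κ u ≠ κ v) ∧ (κ v1 ≠ κ v2 ∧ κ v1 ≠ κ v3)) := by
    intro κ
    rw [hG12, OS.proper_sup_iff]
    refine and_congr_right fun _ => ⟨fun h => ⟨h v1 v2 h12 (by simp), h v1 v3 h13 (by simp)⟩, ?_⟩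
    rintro ⟨h1, h2⟩ u v hne hm
    simp only [Set.mem_insert_iff, Set.mem_singleton_iff, Sym2.eq_iff] at hm
    rcases hm with (⟨rfl, rfl⟩ | ⟨rfl, rfl⟩) | (⟨rfl, rfl⟩ | ⟨rfl, rfl⟩)
    · exact h1
    · exact h1.symm
    · exact h2
    · exact h2.symm
  have prop13 : ∀ κ : V → ℕ, (∀ u v, G13.Adj u v → κ u ≠ κ v) ↔
      ((∀ u v, G.Adj u v → κ u ≠ κ v) ∧ (κ v1 ≠ κ v2 ∧ κ v2 ≠ κ v3)) := by
    intro κ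
    rw [hG13, OS.proper_sup_iff]
    refine and_congr_right fun _ => ⟨fun h => ⟨h v1 v2 h12 (by simp), h v2 v3 h23 (by simp)⟩, ?_⟩
    rintro ⟨h1, h2⟩ u v hne hm
    simp only [Set.mem_insert_iff, Set.mem_singleton_iff, Sym2.eq_iff] at hm
    rcases hm with (⟨rfl, rfl⟩ | ⟨rfl, rfl⟩) | (⟨rfl, rfl⟩ | ⟨rfl, rfl⟩)
    · exact h1
    · exact h1.symm
    · exact h2
    · exact h2.symm
  have prop23 : ∀ κ : V → ℕ, (∀ u v, G23.Adj u v → κ u ≠ κ v) ↔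
      ((∀ u v, G.Adj u v → κ u ≠ κ v) ∧ (κ v1 ≠ κ v3 ∧ κ v2 ≠ κ v3)) := by
    intro κ
    rw [hG23, OS.proper_sup_iff]
    refine and_congr_right fun _ => ⟨fun h => ⟨h v1 v3 h13 (by simp), h v2 v3 h23 (by simp)⟩, ?_⟩
    rintro ⟨h1, h2⟩ u v hne hm
    simp only [Set.mem_insert_iff, Set.mem_singleton_iff, Sym2.eq_iff] at hm
    rcases hm with (⟨rfl, rfl⟩ | ⟨rfl, rfl⟩) | (⟨rfl, rfl⟩ | ⟨rfl, rfl⟩)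
    · exact h1
    · exact h1.symm
    · exact h2
    · exact h2.symm
  have prop123 : ∀ κ : V → ℕ, (∀ u v, G123.Adj u v → κ u ≠ κ v) ↔
      ((∀ u v, G.Adj u v → κ u ≠ κ v) ∧ (κ v1 ≠ κ v2 ∧ κ v1 ≠ κ v3 ∧ κ v2 ≠ κ v3)) := by
    intro κ
    rw [hG123, OS.proper_sup_iff]
    refine and_congr_right fun _ =>
      ⟨fun h => ⟨h v1 v2 h12 (by simp), h v1 v3 h13 (by simp), h v2 v3 h23 (by simp)⟩, ?_⟩
    rintro ⟨h1, h2, h3⟩ u v hne hm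
    simp only [Set.mem_insert_iff, Set.mem_singleton_iff, Sym2.eq_iff] at hm
    rcases hm with (⟨rfl, rfl⟩ | ⟨rfl, rfl⟩) | (⟨rfl, rfl⟩ | ⟨rfl, rfl⟩) | (⟨rfl, rfl⟩ | ⟨rfl, rfl⟩)
    · exact h1
    · exact h1.symm
    · exact h2
    · exact h2.symm
    · exact h3
    · exact h3.symm
  -- the "separating" set
  set B : Set (V → ℕ) := {κ | κ v1 ≠ κ v3} with hB
  have card1 : ∀ d : ℕ →₀ ℕ,
      (S G12 d).ncard + (S G3 d).ncard = (S G1 d).ncard + (S G23 d).ncard := by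
    intro d
    have hAB : S G12 d = S G1 d ∩ B := by
      ext κ
      simp only [hS, hB, Set.mem_setOf_eq, Set.mem_inter_iff, prop1 κ, prop12 κ]
      tauto
    have hBC : S G23 d = B ∩ S G3 d := by
      ext κ
      simp only [hS, hB, Set.mem_setOf_eq, Set.mem_inter_iff, prop3 κ, prop23 κ]
      tauto
    have hdiff : S G1 d \ B = S G3 d \ B := by
      ext κ
      simp only [hS, hB, Set.mem_diff, Set.mem_setOf_eq, prop1 κ, prop3 κ, not_not]
      constructor
      · rintro ⟨⟨⟨hp, hne⟩, hcont⟩, heq⟩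
        exact ⟨⟨⟨hp, fun h => hne (heq.trans h.symm)⟩, hcont⟩, heq⟩
      · rintro ⟨⟨⟨hp, hne⟩, hcont⟩, heq⟩
        exact ⟨⟨⟨hp, fun h => hne (h.symm.trans heq)⟩, hcont⟩, heq⟩
    rw [hAB, hBC]
    exact OS.key (hfin G1 d) (hfin G3 d) hdiff
  have card2 : ∀ d : ℕ →₀ ℕ,
      (S G123 d).ncard + (S G3 d).ncard = (S G13 d).ncard + (S G23 d).ncard := by
    intro d
    have hAB : S G123 d = S G13 d ∩ B := by
      ext κ
      simp only [hS, hB, Set.mem_setOf_eq, Set.mem_inter_iff, prop13 κ, prop123 κ]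
      tauto
    have hBC : S G23 d = B ∩ S G3 d := by
      ext κ
      simp only [hS, hB, Set.mem_setOf_eq, Set.mem_inter_iff, prop3 κ, prop23 κ]
      tauto
    have hdiff : S G13 d \ B = S G3 d \ B := by
      ext κ
      simp only [hS, hB, Set.mem_diff, Set.mem_setOf_eq, prop13 κ, prop3 κ, not_not]
      constructor
      · rintro ⟨⟨⟨hp, _, hne⟩, hcont⟩, heq⟩
        exact ⟨⟨⟨hp, hne⟩, hcont⟩, heq⟩
      · rintro ⟨⟨⟨hp, hne⟩, hcont⟩, heq⟩
        exact ⟨⟨⟨hp, fun h => hne (h.symm.trans heq), hne⟩, hcont⟩, heq⟩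
    rw [hAB, hBC]
    exact OS.key (hfin G13 d) (hfin G3 d) hdiff
  constructor
  · funext d
    show ((S G12 d).ncard : ℚ) = ((S G1 d).ncard : ℚ) + ((S G23 d).ncard : ℚ) - ((S G3 d).ncard : ℚ)
    have := card1 d
    have h' : ((S G12 d).ncard : ℚ) + (S G3 d).ncard = (S G1 d).ncard + (S G23 d).ncard := by
      exact_mod_cast this
    linarith
  · funext d
    show ((S G123 d).ncard : ℚ) = ((S G13 d).ncard : ℚ) + ((S G23 d).ncard : ℚ) - ((S G3 d).ncard : ℚ)
    have := card2 d
    have h' : ((S G123 d).ncard : ℚ) + (S G3 d).ncard = (S G13 d).ncard + (S G23 d).ncard := by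
      exact_mod_cast this
    linarith
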